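/- arXiv:math/0601004 — 7 statements merged into one kernel-verified Lean document; each statement's English description precedes it below -/
import Mathlib

section
/- If Q is a finite commutative kei with m elements, then each element x of Q belongs to exactly (m-1)/2 three-element subquandles of the form {x, p, x*p}, and the total number of such 3-element subquandles is (m choose 2)/3. -/
/-- A kei (involutory quandle): idempotent, involutory, right self-distributive. -/
class Kei (Q : Type*) extends Mul Q where
  idem : ∀ a : Q, a * a = a
  invol : ∀ a b : Q, a * b * b = a
  dist : ∀ a b c : Q, a * b * c = (a * c) * (b * c)

set_option maxHeartbeats 2000000 in
open Finset in
theorem count_three_element_subquandles (Q : Type*) [Kei Q] [Fintype Q]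
    (hcomm : ∀ a b : Q, a * b = b * a) :
    (∀ x : Q,
      {T : Set Q | ∃ p : Q, p ≠ x ∧ T = {x, p, x * p}}.ncard
        = (Fintype.card Q - 1) / 2) ∧
    {T : Set Q | ∃ a b : Q, a ≠ b ∧ T = {a, b, a * b}}.ncard
      = (Fintype.card Q).choose 2 / 3 := by
  classical
  have k1 : ∀ a b : Q, a * (a * b) = b := by
    intro a b
    rw [hcomm, hcomm a b]
    exact Kei.invol b a
  have hne1 : ∀ x p : Q, p ≠ x → x * p ≠ x := by
    intro x p h hxp
    have := k1 x p
    rw [hxp, Kei.idem] at this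
    exact h this.symm
  have hne2 : ∀ x p : Q, p ≠ x → x * p ≠ p := by
    intro x p h hxp
    have := Kei.invol x p
    rw [hxp, Kei.idem] at this
    exact h this
  constructor
  · -- first part
    intro x
    set g : Q → Finset Q := fun p => ({x, p, x * p} : Finset Q) with hg
    have hgsame : ∀ p : Q, p ≠ x → g (x * p) = g p := by
      intro p hp
      simp only [hg, k1]
      ext z
      simp only [mem_insert, mem_singleton]
      tauto
    set I : Finset (Finset Q) := (univ.erase x).image g with hI
    have hSet : {T : Set Q | ∃ p : Q, p ≠ x ∧ T = {x, p, x * p}}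
        = (fun t : Finset Q => (t : Set Q)) '' (I : Set (Finset Q)) := by
      ext T
      simp only [Set.mem_setOf_eq, Set.mem_image, Finset.mem_coe, hI, mem_image,
        mem_erase, mem_univ, and_true]
      constructor
      · rintro ⟨p, hp, rfl⟩
        refine ⟨g p, ⟨p, hp, rfl⟩, ?_⟩
        simp [hg]
      · rintro ⟨t, ⟨p, hp, rfl⟩, rfl⟩
        exact ⟨p, hp, by simp [hg]⟩
    have hfib : ∀ t ∈ I, ((univ.erase x).filter (fun p => g p = t)).card = 2 := by
      intro t ht
      obtain ⟨p, hp, rfl⟩ := mem_image.mp ht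
      have hpx : p ≠ x := (mem_erase.mp hp).1
      have hfeq : (univ.erase x).filter (fun q => g q = g p) = {p, x * p} := by
        ext q
        simp only [mem_filter, mem_erase, mem_univ, and_true, true_and, mem_insert,
          mem_singleton]
        constructor
        · rintro ⟨hq, heq⟩
          have : q ∈ g q := by simp [hg]
          rw [heq] at this
          simp only [hg, mem_insert, mem_singleton] at this
          tauto
        · rintro (rfl | rfl)
          · exact ⟨hpx, rfl⟩
          · exact ⟨hne1 x p hpx, hgsame p hpx⟩
      rw [hfeq, card_insert_of_notMem (by simp [(hne2 x p hpx).symm]), card_singleton]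
    have hmaps : ∀ p ∈ univ.erase x, g p ∈ I := fun p hp => mem_image_of_mem g hp
    have hsum := Finset.card_eq_sum_card_fiberwise hmaps
    rw [Finset.sum_congr rfl hfib, Finset.sum_const, smul_eq_mul] at hsum
    have hcard : (univ.erase x).card = Fintype.card Q - 1 := by
      rw [card_erase_of_mem (mem_univ x), card_univ]
    rw [hSet, Set.ncard_image_of_injective _ Finset.coe_injective, Set.ncard_coe_finset]
    omega
  · -- second part
    set f : Q × Q → Finset Q := fun ab => ({ab.1, ab.2, ab.1 * ab.2} : Finset Q) with hf
    set I : Finset (Finset Q) := (univ : Finset Q).offDiag.image f with hI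
    have hSet : {T : Set Q | ∃ a b : Q, a ≠ b ∧ T = {a, b, a * b}}
        = (fun t : Finset Q => (t : Set Q)) '' (I : Set (Finset Q)) := by
      ext T
      simp only [Set.mem_setOf_eq, Set.mem_image, Finset.mem_coe, hI, mem_image,
        Finset.mem_offDiag, mem_univ, true_and]
      constructor
      · rintro ⟨a, b, hab, rfl⟩
        refine ⟨f (a, b), ⟨(a, b), hab, rfl⟩, ?_⟩
        simp [hf]
      · rintro ⟨t, ⟨⟨a, b⟩, hab, rfl⟩, rfl⟩
        exact ⟨a, b, hab, by simp [hf]⟩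
    have hfib : ∀ t ∈ I, ((univ : Finset Q).offDiag.filter (fun q => f q = t)).card = 6 := by
      intro t ht
      obtain ⟨⟨a, b⟩, hab, rfl⟩ := mem_image.mp ht
      rw [Finset.mem_offDiag] at hab
      have hab' : a ≠ b := hab.2.2
      have hca : a * b ≠ a := hne1 a b (Ne.symm hab')
      have hcb : a * b ≠ b := hne2 a b (Ne.symm hab')
      have eba : b * a = a * b := hcomm b a
      have eac : a * (a * b) = b := k1 a b
      have eca : (a * b) * a = b := by rw [hcomm]; exact k1 a b
      have ebc : b * (a * b) = a := by rw [hcomm a b]; exact k1 b a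
      have ecb : (a * b) * b = a := Kei.invol a b
      have hfeq : (univ : Finset Q).offDiag.filter (fun q => f q = f (a, b))
          = ({a, b, a * b} : Finset Q).offDiag := by
        ext ⟨u, v⟩
        simp only [mem_filter, Finset.mem_offDiag, mem_univ, true_and, mem_insert,
          mem_singleton]
        constructor
        · rintro ⟨huv, heq⟩
          have hu : u ∈ f (u, v) := by simp [hf]
          have hv : v ∈ f (u, v) := by simp [hf]
          rw [heq] at hu hv
          simp only [hf, mem_insert, mem_singleton] at hu hv
          exact ⟨hu, hv, huv⟩
        · rintro ⟨hu, hv, huv⟩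
          refine ⟨huv, ?_⟩
          rcases hu with rfl | rfl | rfl <;> rcases hv with rfl | rfl | rfl
          · exact absurd rfl huv
          · rfl
          · simp only [hf, eac]
            ext z; simp only [mem_insert, mem_singleton]; tauto
          · simp only [hf, eba]
            ext z; simp only [mem_insert, mem_singleton]; tauto
          · exact absurd rfl huv
          · simp only [hf, ebc]
            ext z; simp only [mem_insert, mem_singleton]; tauto
          · simp only [hf, eca]
            ext z; simp only [mem_insert, mem_singleton]; tauto
          · simp only [hf, ecb]
            ext z; simp only [mem_insert, mem_singleton]; tauto
          · exact absurd rfl huv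
      have h3 : ({a, b, a * b} : Finset Q).card = 3 := by
        rw [card_insert_of_notMem (by simp [hab', Ne.symm hca]),
          card_insert_of_notMem (by simp [Ne.symm hcb]), card_singleton]
      rw [hfeq, Finset.offDiag_card, h3]
    have hmaps : ∀ p ∈ (univ : Finset Q).offDiag, f p ∈ I := fun p hp => mem_image_of_mem f hp
    have hsum := Finset.card_eq_sum_card_fiberwise hmaps
    rw [Finset.sum_congr rfl hfib, Finset.sum_const, smul_eq_mul] at hsum
    have hcard : (univ : Finset Q).offDiag.card
        = Fintype.card Q * Fintype.card Q - Fintype.card Q := by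
      rw [Finset.offDiag_card, card_univ]
    rw [hSet, Set.ncard_image_of_injective _ Finset.coe_injective, Set.ncard_coe_finset,
      Nat.choose_two_right]
    have hmul : Fintype.card Q * (Fintype.card Q - 1)
        = Fintype.card Q * Fintype.card Q - Fintype.card Q := by
      cases Fintype.card Q with
      | zero => simp
      | succ n => rw [Nat.mul_succ]; simp
    rw [hmul]
    omega
end

section
/- Any kei satisfying the universal relation r_k for some odd k (i.e., a = b*a*b*...*a*b with k letters on the right side, for all a, b) is strongly algebraically connected: for each pair a, b in Q there exists a single element c in Q with a*c = b. -/
/-- Left-normed alternating word with n letters, ending in b: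
altWord op a b 3 = op (op b a) b, i.e. b*a*b. -/
def altWord {Q : Type*} (op : Q → Q → Q) (a b : Q) : ℕ → Q
  | 0 => a
  | 1 => b
  | (n + 2) => op (altWord op b a (n + 1)) b

/-- Auxiliary word capturing the recursion for `z * altWord x y (n+1)`. -/
def fWord {Q : Type*} [Mul Q] (z x y : Q) : ℕ → Q
  | 0 => z * y
  | (n + 1) => fWord (z * y) y x n * y

lemma kei_key {Q : Type*} [Kei Q] (z w y : Q) :
    z * (w * y) = ((z * y) * w) * y := by
  rw [Kei.dist, Kei.invol]

lemma fWord_eq {Q : Type*} [Kei Q] :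
    ∀ (n : ℕ) (z x y : Q), z * altWord (· * ·) x y (n + 1) = fWord z x y n := by
  intro n
  induction n with
  | zero => intro z x y; rfl
  | succ n ih =>
      intro z x y
      show z * (altWord (· * ·) y x (n + 1) * y) = fWord (z * y) y x n * y
      rw [kei_key, ih]

lemma altWord_succ {Q : Type*} [Kei Q] :
    ∀ (j : ℕ) (x y : Q), altWord (· * ·) y x j * y = altWord (· * ·) x y (j + 1) := by
  intro j x y
  match j with
  | 0 => exact Kei.idem y
  | (n + 1) => rfl

lemma fWord_altWord {Q : Type*} [Kei Q] :
    ∀ (n j : ℕ) (x y : Q),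
      fWord (altWord (· * ·) y x j) x y n = altWord (· * ·) x y (2 * n + j + 1) := by
  intro n
  induction n with
  | zero =>
      intro j x y
      have h : 2 * 0 + j + 1 = j + 1 := by ring
      rw [h]
      exact altWord_succ j x y
  | succ n ih =>
      intro j x y
      show fWord (altWord (· * ·) y x j * y) y x n * y = _
      rw [altWord_succ, ih (j + 1) y x, altWord_succ]
      congr 1
      ring

theorem strongly_connected_of_odd_burnside (Q : Type*) [Kei Q]
    (k : ℕ) (hk : Odd k)
    (hr : ∀ a b : Q, a = altWord (· * ·) a b k) :
    ∀ a b : Q, ∃ c : Q, a * c = b := by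
  intro a b
  obtain ⟨m, hm⟩ := hk
  refine ⟨altWord (· * ·) b a (m + 1), ?_⟩
  have h1 : a * altWord (· * ·) b a (m + 1) = fWord a b a m := fWord_eq m a b a
  have h2 : fWord (altWord (· * ·) a b 0) b a m = altWord (· * ·) b a (2 * m + 0 + 1) :=
    fWord_altWord m 0 b a
  simp only [altWord] at h2
  rw [h1, h2]
  have := hr b a
  rw [hm] at this
  exact this.symm
end

section
/- Let G be a group in which every element satisfies w^3 = 1 (a group of exponent 3). Then G with the core operation a*b = b a^{-1} b is a commutative kei. -/
theorem core_of_exponent_three_is_comm_kei (G : Type*) [Group G]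
    (h3 : ∀ w : G, w ^ 3 = 1) :
    let op : G → G → G := fun a b => b * a⁻¹ * b
    (∀ a : G, op a a = a) ∧
    (∀ a b : G, op (op a b) b = a) ∧
    (∀ a b c : G, op (op a b) c = op (op a c) (op b c)) ∧
    (∀ a b : G, op a b = op b a) := by
  intro op
  refine ⟨fun a => by simp [op], fun a b => by simp [op],
    fun a b c => by simp [op]; group, fun a b => ?_⟩
  have h := h3 (a * b⁻¹)
  rw [pow_succ, pow_succ, pow_one] at h
  simp only [op]
  have key : a * b⁻¹ * a = b * a⁻¹ * b := by
    have h2 : (a * b⁻¹) * (a * b⁻¹) = (a * b⁻¹)⁻¹ := by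
      rw [eq_inv_iff_mul_eq_one, ← h]
    calc a * b⁻¹ * a = (a * b⁻¹) * (a * b⁻¹) * b := by group
      _ = (a * b⁻¹)⁻¹ * b := by rw [h2]
      _ = b * a⁻¹ * b := by group
  rw [key]
end

section
/- In the free commutative kei on generators {x_0, x_1, x_2, x_3}, the identity x_0*x_1*x_2*x_0 = x_0*x_2*x_1 holds. -/
theorem identity_one (Q : Type*) [Kei Q]
    (hcomm : ∀ a b : Q, a * b = b * a) (x0 x1 x2 : Q) :
    x0 * x1 * x2 * x0 = x0 * x2 * x1 := by
  rw [Kei.dist (x0*x1) x2 x0, Kei.dist x0 x1 x0, Kei.idem,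
      hcomm x0 (x1*x0), Kei.invol, hcomm x0 x2, hcomm (x2*x0) x1]
end

section
/- In any commutative kei, for all elements w, x_0, x_1: w*x_0*x_1*x_0 = w*x_1*x_0*x_1 (left-normed). -/
theorem identity_two (Q : Type*) [Kei Q]
    (hcomm : ∀ a b : Q, a * b = b * a) (w x0 x1 : Q) :
    w * x0 * x1 * x0 = w * x1 * x0 * x1 := by
  rw [Kei.dist (w * x0) x1 x0, Kei.invol, Kei.dist (w * x1) x0 x1, Kei.invol,
    hcomm x0 x1]
end

section
/- In any commutative kei, for all elements x_0, x_1, x_2, x_3: x_0*x_1*x_2*x_3*x_0*x_1 = x_0*x_1*x_3*x_2*x_0 (left-normed). -/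
theorem identity_five (Q : Type*) [Kei Q]
    (hcomm : ∀ a b : Q, a * b = b * a) (x0 x1 x2 x3 : Q) :
    x0 * x1 * x2 * x3 * x0 * x1 = x0 * x1 * x3 * x2 * x0 := by
  have L : ∀ a b : Q, a * (a * b) = b := by
    intro a b
    have h1 : a * b = (a * (a * b)) * (b * (a * b)) := by
      conv_lhs => rw [← Kei.idem (a := a * b)]
      rw [Kei.dist]
    calc a * (a * b)
        = ((a * (a * b)) * (b * (a * b))) * (b * (a * b)) := (Kei.invol _ _).symm
      _ = (a * b) * (b * (a * b)) := by rw [← h1]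
      _ = (b * (a * b)) * (a * b) := hcomm _ _
      _ = b := Kei.invol _ _
  have L' : ∀ a b : Q, (a * b) * a = b := fun a b => (hcomm _ _).trans (L a b)
  calc x0 * x1 * x2 * x3 * x0 * x1
      = ((x0 * x1 * x2 * x0) * (x3 * x0)) * x1 := by
        rw [Kei.dist (x0 * x1 * x2) x3 x0]
    _ = (((x0 * x1 * x0) * (x2 * x0)) * (x3 * x0)) * x1 := by
        rw [Kei.dist (x0 * x1) x2 x0]
    _ = ((x1 * (x2 * x0)) * (x3 * x0)) * x1 := by rw [L' x0 x1]
    _ = ((x1 * (x2 * x0)) * x1) * ((x3 * x0) * x1) := Kei.dist _ _ _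
    _ = (x2 * x0) * ((x3 * x0) * x1) := by rw [L' x1 (x2 * x0)]
    _ = ((x3 * x0) * x1) * (x2 * x0) := hcomm _ _
    _ = (x1 * (x3 * x0)) * (x2 * x0) := by rw [hcomm (x3 * x0) x1]
    _ = ((x0 * x1 * x0) * (x3 * x0)) * (x2 * x0) := by rw [L' x0 x1]
    _ = (x0 * x1 * x3 * x0) * (x2 * x0) := by rw [Kei.dist (x0 * x1) x3 x0]
    _ = x0 * x1 * x3 * x2 * x0 := (Kei.dist (x0 * x1 * x3) x2 x0).symm
end

section
/- In any kei satisfying the fourth Burnside relation x = x*y*x*y for all x, y (left-normed), the following identity holds for all a, b, c: a*b*c*a*b*a = a*b*c*a*b. -/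
theorem burnside4_loop_identity (Q : Type*) [Kei Q]
    (h4 : ∀ x y : Q, x = x * y * x * y) (a b c : Q) :
    a * b * c * a * b * a = a * b * c * a * b := by
  have L : ∀ x y : Q, x * y * x = x * y := by
    intro x y
    calc x * y * x = x * y * x * y * y := (Kei.invol _ _).symm
    _ = x * y := by rw [← h4]
  have key : a * b * c * a * b = a * ((c * a) * b) := by
    rw [Kei.dist (a*b) c a, L, Kei.dist, Kei.invol]
  rw [key, L]
end
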